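/- For any form α in the exterior algebra of a finite-dimensional vector space, the annihilator L_α = { X + ξ ∈ V ⊕ V* : ι_X α + ξ ∧ α = 0 } is an isotropic subspace of V ⊕ V* with respect to the natural pairing, provided α ≠ 0. -/
import Mathlib


/- STATEMENT 8: For a nonzero form α ∈ Λ V*, the annihilator
   L_α = { X + ξ ∈ V ⊕ V* : ι_X α + ξ ∧ α = 0 }
   is isotropic with respect to the natural pairing
   ⟨X+ξ, Y+η⟩ = (1/2)(η(X) + ξ(Y)). -/

open Module

set_option synthInstance.maxHeartbeats 400000
set_option maxHeartbeats 1000000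

noncomputable def naturalPairing (V : Type*) [AddCommGroup V] [Module ℝ V] :
    LinearMap.BilinForm ℝ (V × Module.Dual ℝ V) :=
  LinearMap.mk₂ ℝ (fun v w => (v.2 w.1 + w.2 v.1) / 2)
    (by intro m₁ m₂ n; simp [map_add]; ring)
    (by intro c m n; simp; ring)
    (by intro m n₁ n₂; simp [map_add]; ring)
    (by intro c m n; simp; ring)

/-- The Clifford action `(X + ξ) · α = ι_X α + ξ ∧ α` of `V ⊕ V*` on `Λ V*`. -/
noncomputable def cliffordAct {V : Type*} [AddCommGroup V] [Module ℝ V]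
    (v : V × Module.Dual ℝ V) (α : ExteriorAlgebra ℝ (Module.Dual ℝ V)) :
    ExteriorAlgebra ℝ (Module.Dual ℝ V) :=
  CliffordAlgebra.contractLeft (Q := (0 : QuadraticForm ℝ (Module.Dual ℝ V)))
      (Module.Dual.eval ℝ V v.1) α
    + ExteriorAlgebra.ι ℝ v.2 * α

theorem annihilator_isotropic (V : Type*) [AddCommGroup V] [Module ℝ V]
    (α : ExteriorAlgebra ℝ (Module.Dual ℝ V)) (hα : α ≠ 0) :
    ∀ v w : V × Module.Dual ℝ V,
      cliffordAct v α = 0 → cliffordAct w α = 0 → naturalPairing V v w = 0 := by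
  intro v w hv hw
  set Q : QuadraticForm ℝ (Module.Dual ℝ V) := 0 with hQ
  set dX := Module.Dual.eval ℝ V v.1
  set dY := Module.Dual.eval ℝ V w.1
  unfold cliffordAct at hv hw
  have hv' : CliffordAlgebra.contractLeft (Q := Q) dX α = - (ExteriorAlgebra.ι ℝ v.2 * α) := by
    linear_combination (norm := module) hv
  have hw' : CliffordAlgebra.contractLeft (Q := Q) dY α = - (ExteriorAlgebra.ι ℝ w.2 * α) := by
    linear_combination (norm := module) hw
  -- anticommutation of contractions
  have hanti : CliffordAlgebra.contractLeft (Q := Q) dX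
        (CliffordAlgebra.contractLeft (Q := Q) dY α)
      + CliffordAlgebra.contractLeft (Q := Q) dY
        (CliffordAlgebra.contractLeft (Q := Q) dX α) = 0 := by
    have h := CliffordAlgebra.contractLeft_contractLeft (Q := Q) (d := dX + dY) α
    have hx := CliffordAlgebra.contractLeft_contractLeft (Q := Q) (d := dX) α
    have hy := CliffordAlgebra.contractLeft_contractLeft (Q := Q) (d := dY) α
    simp only [map_add, LinearMap.add_apply] at h
    linear_combination (norm := module) h - hx - hy
  have h1 : CliffordAlgebra.contractLeft (Q := Q) dX
      (CliffordAlgebra.contractLeft (Q := Q) dY α + ExteriorAlgebra.ι ℝ w.2 * α) = 0 := by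
    rw [hw]; simp
  rw [map_add, CliffordAlgebra.contractLeft_ι_mul, hv'] at h1
  have h2 : CliffordAlgebra.contractLeft (Q := Q) dY
      (CliffordAlgebra.contractLeft (Q := Q) dX α + ExteriorAlgebra.ι ℝ v.2 * α) = 0 := by
    rw [hv]; simp
  rw [map_add, CliffordAlgebra.contractLeft_ι_mul, hw'] at h2
  have hswap : ExteriorAlgebra.ι ℝ v.2 * ExteriorAlgebra.ι ℝ w.2
      + ExteriorAlgebra.ι ℝ w.2 * ExteriorAlgebra.ι ℝ v.2 = 0 := by
    have := CliffordAlgebra.ι_mul_ι_add_swap (Q := Q) v.2 w.2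
    simpa [QuadraticMap.polar] using this
  simp only [mul_neg, sub_neg_eq_add] at h1 h2
  have hmul : ExteriorAlgebra.ι ℝ w.2 * (ExteriorAlgebra.ι ℝ v.2 * α)
      + ExteriorAlgebra.ι ℝ v.2 * (ExteriorAlgebra.ι ℝ w.2 * α) = 0 := by
    rw [← mul_assoc, ← mul_assoc, ← add_mul, add_comm, hswap, zero_mul]
  have key : (v.2 w.1 + w.2 v.1) • α = 0 := by
    have h3 : dX w.2 • α + dY v.2 • α = 0 := by
      linear_combination (norm := module) h1 + h2 - hanti - hmul
    simp only [dX, dY, Module.Dual.eval_apply] at h3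
    linear_combination (norm := module) h3
  have hscal : (v.2 w.1 + w.2 v.1) = 0 := by
    by_contra h
    exact hα ((smul_eq_zero.mp key).resolve_left h)
  show (v.2 w.1 + w.2 v.1) / 2 = 0
  rw [hscal]; norm_num
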